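/- The 3×3 matrix R = (1/2)[[1,√2,1],[√2,0,-√2],[1,-√2,1]] (the restriction of H⊗H to the symmetric subspace) is not a qutrit Clifford gate: R X₃ R† is not an element of the qutrit Pauli group, i.e., R X₃ R† is not of the form ω^c X₃^a Z₃^b for any a, b, c ∈ Z (where here the phase may range over all powers of ω = exp(2πi/3) times cube roots of unity, equivalently R X₃ R† ∉ {λ X₃^a Z₃^b : a,b ∈ Z₃, λ ∈ C, |λ|=1}). -/

import Mathlib

open Matrix

/-- The primitive cube root of unity `ω = exp(2πi/3)`. -/
noncomputable def omega3 : ℂ := Complex.exp (2 * Real.pi * Complex.I / 3)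

/-- The qutrit cyclic-shift Pauli `X₃`. -/
def X3 : Matrix (Fin 3) (Fin 3) ℂ :=
  Matrix.of fun i j => if i = j + 1 then 1 else 0

/-- The qutrit clock Pauli `Z₃ = diag(1, ω, ω²)`. -/
noncomputable def Z3 : Matrix (Fin 3) (Fin 3) ℂ :=
  Matrix.diagonal fun s : Fin 3 => omega3 ^ (s : ℕ)

/-- The matrix `R = (1/2)[[1,√2,1],[√2,0,-√2],[1,-√2,1]]`
(the restriction of `H ⊗ H` to the symmetric subspace). -/
noncomputable def Rmat : Matrix (Fin 3) (Fin 3) ℂ :=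
  (2 : ℂ)⁻¹ • !![1, (Real.sqrt 2 : ℂ), 1;
                 (Real.sqrt 2 : ℂ), 0, -(Real.sqrt 2 : ℂ);
                 1, -(Real.sqrt 2 : ℂ), 1]

/-
Every entry of `λ X₃^a Z₃^b` with `|λ| = 1` has modulus `0` or `1`, since `X₃^a` is a permutation
matrix and `Z₃^b` is diagonal with unimodular entries, whereas the `(0, 2)` entry of `R X₃ R†`
is `1/4`.
-/

lemma norm_omega3 : ‖omega3‖ = 1 := by
  rw [omega3, Complex.norm_exp]
  norm_num [Complex.div_re, Complex.mul_re]

lemma X3_eq : X3 = !![0, 0, 1; 1, 0, 0; 0, 1, 0] := by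
  ext i j
  fin_cases i <;> fin_cases j <;> rfl

section

open Fin.NatCast

lemma X3_mul_apply (M : Matrix (Fin 3) (Fin 3) ℂ) (i j : Fin 3) :
    (X3 * M) i j = M (i - 1) j := by
  simp [X3, Matrix.mul_apply, ← sub_eq_iff_eq_add, eq_comm]

lemma X3_pow_apply (a : ℕ) (i j : Fin 3) :
    (X3 ^ a) i j = if i = j + (a : Fin 3) then 1 else 0 := by
  induction a generalizing i with
  | zero => simp [Matrix.one_apply]
  | succ a ih =>
    rw [pow_succ', X3_mul_apply, ih, Nat.cast_succ]
    simp only [sub_eq_iff_eq_add, add_assoc]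

lemma norm_X3_pow_mul_Z3_pow_apply (a b : ℕ) (i j : Fin 3) :
    ‖(X3 ^ a * Z3 ^ b) i j‖ = if i = j + (a : Fin 3) then 1 else 0 := by
  rw [Z3, diagonal_pow, mul_diagonal, X3_pow_apply, norm_mul]
  split_ifs <;> simp [norm_omega3]

end

lemma Rmat_mul_X3_mul_conjTranspose_apply_zero_two : (Rmat * X3 * Rmatᴴ) 0 2 = 4⁻¹ := by
  rw [X3_eq]
  simp [Rmat, Matrix.mul_apply, Fin.sum_univ_three, conjTranspose_apply, map_ofNat]
  ring

/-- `R` is not a qutrit Clifford gate: `R X₃ R†` is not in the qutrit Pauli group, i.e. it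
is not of the form `λ X₃^a Z₃^b` for any unit-modulus phase `λ` and `a, b ∈ ℤ₃`. -/
theorem stmt16 :
    ¬ ∃ (a b : ℕ) (lam : ℂ), ‖lam‖ = 1 ∧
      Rmat * X3 * Rmatᴴ = lam • (X3 ^ a * Z3 ^ b) := by
  rintro ⟨a, b, lam, hlam, heq⟩
  have hentry := congrArg norm (congrFun (congrFun heq 0) 2)
  rw [Rmat_mul_X3_mul_conjTranspose_apply_zero_two, Matrix.smul_apply, smul_eq_mul, norm_mul, hlam,
    norm_X3_pow_mul_Z3_pow_apply] at hentry
  split_ifs at hentry <;> norm_num at hentry
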